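/- Let n ≥ 4 and let p : Fin n → ℝ² be the circle placement p(i) = (cos(2πi/n), sin(2πi/n)). If a < b < c < d are four indices in Fin n, then the open segment between p(a) and p(c) and the open segment between p(b) and p(d) have nonempty intersection. (Interleaved chords of the circle drawing cross: in the proof of Lemma 1, every 4-set {a,b,c,d} with a<b<c<d yields a crossing between the edges (a,c) and (b,d).) -/

import Mathlib

/-!
If all four triples of `A, B, C, D` are positively oriented (`orient` > 0), then `B, D` lie on
opposite sides of `AC` and `A, C` on opposite sides of `BD`, so the diagonals cross; the crossing
point is an explicit convex combination weighted by these determinants. For three points at angles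
`α < β < γ < α + 2π` of the unit circle the determinant equals
`4 sin ((β - α) / 2) sin ((γ - β) / 2) sin ((γ - α) / 2) > 0`, and the vertices of the circle
placement sit at increasing angles in `[0, 2π)`.
-/

/-- The circle placement: vertex `i` of `Fin n` is placed at the point
`(cos (2πi/n), sin (2πi/n))` of the unit circle in `ℝ²`. -/
noncomputable def circlePlacement (n : ℕ) : Fin n → ℝ × ℝ :=
  fun i => (Real.cos (2 * Real.pi * (i : ℕ) / n), Real.sin (2 * Real.pi * (i : ℕ) / n))

open Real

/-- Twice the signed area of the triangle `A B C`. -/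
def orient (A B C : ℝ × ℝ) : ℝ :=
  (B.1 - A.1) * (C.2 - A.2) - (B.2 - A.2) * (C.1 - A.1)

theorem openSegment_inter_nonempty_of_orient_pos {A B C D : ℝ × ℝ}
    (hABC : 0 < orient A B C) (hABD : 0 < orient A B D)
    (hACD : 0 < orient A C D) (hBCD : 0 < orient B C D) :
    (openSegment ℝ A C ∩ openSegment ℝ B D).Nonempty := by
  -- both sides are twice the area of the quadrilateral `ABCD`
  have hsum : orient A B D + orient B C D = orient A B C + orient A C D := by
    simp only [orient]; ring
  have hs : 0 < orient A B D + orient B C D := by positivity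
  set s := orient A B D + orient B C D
  refine ⟨(orient B C D / s) • A + (orient A B D / s) • C,
    ⟨_, _, by positivity, by positivity, by field_simp; ring, rfl⟩,
    ⟨orient A C D / s, orient A B C / s, by positivity, by positivity,
      by field_simp; linarith, ?_⟩⟩
  obtain ⟨a₁, a₂⟩ := A; obtain ⟨b₁, b₂⟩ := B; obtain ⟨c₁, c₂⟩ := C; obtain ⟨d₁, d₂⟩ := D
  ext <;> simp only [Prod.fst_add, Prod.snd_add, Prod.smul_fst, Prod.smul_snd, smul_eq_mul] <;>
    field_simp <;> simp only [orient] <;> ring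

theorem sin_two_mul_add_sin_two_mul_sub_sin_two_mul_add (u v : ℝ) :
    sin (2 * u) + sin (2 * v) - sin (2 * (u + v)) = 4 * sin u * sin v * sin (u + v) := by
  simp only [mul_add, sin_add, sin_two_mul, cos_two_mul]
  linear_combination (-4 * sin u * cos u) * sin_sq_add_cos_sq v +
    (-4 * sin v * cos v) * sin_sq_add_cos_sq u

theorem orient_cos_sin (α β γ : ℝ) :
    orient (cos α, sin α) (cos β, sin β) (cos γ, sin γ) =
      4 * sin ((β - α) / 2) * sin ((γ - β) / 2) * sin ((γ - α) / 2) := by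
  have key := sin_two_mul_add_sin_two_mul_sub_sin_two_mul_add ((β - α) / 2) ((γ - β) / 2)
  rw [show (β - α) / 2 + (γ - β) / 2 = (γ - α) / 2 by ring] at key
  rw [← key, show 2 * ((β - α) / 2) = β - α by ring, show 2 * ((γ - β) / 2) = γ - β by ring,
    show 2 * ((γ - α) / 2) = γ - α by ring, sin_sub, sin_sub, sin_sub, orient]
  ring

theorem orient_cos_sin_pos {α β γ : ℝ} (hαβ : α < β) (hβγ : β < γ) (hγα : γ < α + 2 * π) :
    0 < orient (cos α, sin α) (cos β, sin β) (cos γ, sin γ) := by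
  have hsin {x : ℝ} (h₀ : 0 < x) (hπ : x < 2 * π) : 0 < sin (x / 2) :=
    sin_pos_of_pos_of_lt_pi (by linarith) (by linarith)
  rw [orient_cos_sin]
  have := hsin (sub_pos.2 hαβ) (by linarith)
  have := hsin (sub_pos.2 hβγ) (by linarith)
  have := hsin (sub_pos.2 (hαβ.trans hβγ)) (by linarith)
  positivity

theorem orient_circlePlacement_pos {n : ℕ} {i j k : Fin n} (hij : i < j) (hjk : j < k) :
    0 < orient (circlePlacement n i) (circlePlacement n j) (circlePlacement n k) := by
  have hn : (0 : ℝ) < n := by exact_mod_cast i.pos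
  have angle_lt {i j : Fin n} (h : i < j) : 2 * π * (i : ℕ) / n < 2 * π * (j : ℕ) / n := by
    gcongr; exact_mod_cast h
  have angle_nonneg : 0 ≤ 2 * π * (i : ℕ) / n := by positivity
  have angle_lt_two_pi : 2 * π * (k : ℕ) / n < 2 * π := by
    rw [div_lt_iff₀ hn]; gcongr; exact_mod_cast k.isLt
  exact orient_cos_sin_pos (angle_lt hij) (angle_lt hjk) (by linarith)

theorem interleaved_chords_cross_general (n : ℕ)
    (a b c d : Fin n) (hab : a < b) (hbc : b < c) (hcd : c < d) :
    (openSegment ℝ (circlePlacement n a) (circlePlacement n c) ∩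
      openSegment ℝ (circlePlacement n b) (circlePlacement n d)).Nonempty :=
  openSegment_inter_nonempty_of_orient_pos (orient_circlePlacement_pos hab hbc)
    (orient_circlePlacement_pos hab (hbc.trans hcd))
    (orient_circlePlacement_pos (hab.trans hbc) hcd) (orient_circlePlacement_pos hbc hcd)

/-- Interleaved chords of the circle drawing cross: for `a < b < c < d` in `Fin n`,
the open segments `p a p c` and `p b p d` intersect. -/
theorem interleaved_chords_cross (n : ℕ) (hn : 4 ≤ n)
    (a b c d : Fin n) (hab : a < b) (hbc : b < c) (hcd : c < d) :
    (openSegment ℝ (circlePlacement n a) (circlePlacement n c) ∩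
      openSegment ℝ (circlePlacement n b) (circlePlacement n d)).Nonempty :=
  interleaved_chords_cross_general n a b c d hab hbc hcd
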